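/- arXiv:0706.2343 — 4 statements merged into one kernel-verified Lean document; each statement's English description precedes it below -/
import Mathlib

section
/- Let d ≥ 1. The set of vectors μ = (μ_1, …, μ_d) ∈ ℂ^d for which the Diophantine condition fails — i.e., for which there do NOT exist C, ν > 0 such that |m·μ + l − μ_s| > C(|m| + l)^{−ν} for all l ∈ ℕ, all s ∈ {1, …, d}, and all m ∈ ℕ^d with |m| ≥ 2 — has Lebesgue measure zero in ℂ^d (identified with ℝ^{2d}). -/
/-!
Take `ν = d + 1` and fix a polydisc of radius `R`. A non-Diophantine `μ` lies, for every `C > 0`,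
in one of the sets `|m·μ + l - μ_s| ≤ C (|m| + l)^(-ν)` with `|m| ≥ 2`. As `|m| ≥ 2`, the integer
vector `m - e_s` has a coordinate of absolute value at least `1`; integrating over that coordinate
first, such a set meets the polydisc in measure `O(C² (|m| + l)^(-2ν))`. By
`∏ (m_i + 1) (l + 1) ≤ (2 (|m| + l))^(d + 1)`, the sum of these bounds over `s, l, m` is dominated
by a product of convergent series `∑ (k + 1)^(-2)`. So the non-Diophantine part of the polydisc has
measure `O(C²)` for every `C > 0`, hence measure zero.
-/

open MeasureTheory Metric
open scoped ENNReal

theorem MeasureTheory.Measure.prod_apply_le_mul_of_fiber_le {α β : Type*} [MeasurableSpace α]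
    [MeasurableSpace β] {μ : Measure α} {ν : Measure β} [SFinite μ] [SFinite ν]
    {s : Set (α × β)} (hs : MeasurableSet s) {t : Set β} (ht : MeasurableSet t)
    (hst : ∀ p ∈ s, p.2 ∈ t) {c : ℝ≥0∞} (hc : ∀ y ∈ t, μ ((fun x => (x, y)) ⁻¹' s) ≤ c) :
    μ.prod ν s ≤ c * ν t := by
  rw [Measure.prod_apply_symm hs, ← lintegral_indicator_const ht]
  refine lintegral_mono fun y => ?_
  by_cases hy : y ∈ t
  · simpa [hy] using hc y hy
  · have : (fun x => (x, y)) ⁻¹' s = ∅ :=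
      Set.eq_empty_of_forall_notMem fun x hx => hy (hst _ hx)
    simp [this]

theorem Complex.volume_closedBall_pi {ι : Type*} [Fintype ι] {R : ℝ} (hR : 0 ≤ R) :
    volume (closedBall (0 : ι → ℂ) R) = (ENNReal.ofReal R ^ 2 * NNReal.pi) ^ Fintype.card ι := by
  rw [closedBall_pi _ hR, volume_pi_pi]
  simp

theorem Complex.volume_setOf_norm_mul_add_le {a : ℂ} (ha : 1 ≤ ‖a‖) (b : ℂ) (ε : ℝ) :
    volume {x : ℂ | ‖a * x + b‖ ≤ ε} ≤ ENNReal.ofReal ε ^ 2 * NNReal.pi := by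
  have ha0 : a ≠ 0 := norm_pos_iff.mp (one_pos.trans_le ha)
  rw [← Complex.volume_closedBall (-(b / a))]
  refine measure_mono fun x (hx : ‖a * x + b‖ ≤ ε) => ?_
  rw [mem_closedBall, dist_eq_norm, sub_neg_eq_add,
    show x + b / a = (a * x + b) / a by field_simp, norm_div]
  exact (div_le_self (norm_nonneg _) ha).trans hx

theorem volume_closedBall_inter_setOf_norm_linear_le {n : ℕ} (a : Fin (n + 1) → ℂ) {j : Fin (n + 1)}
    (ha : 1 ≤ ‖a j‖) (c : ℂ) (ε : ℝ) {R : ℝ} (hR : 0 ≤ R) :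
    volume (closedBall (0 : Fin (n + 1) → ℂ) R ∩ {μ | ‖∑ i, a i * μ i + c‖ ≤ ε})
      ≤ ENNReal.ofReal ε ^ 2 * NNReal.pi * (ENNReal.ofReal R ^ 2 * NNReal.pi) ^ n := by
  let rest : (Fin n → ℂ) → ℂ := fun y => ∑ k, a (j.succAbove k) * y k + c
  let t : Set (ℂ × (Fin n → ℂ)) :=
    {p | ‖a j * p.1 + rest p.2‖ ≤ ε} ∩ Prod.snd ⁻¹' closedBall 0 R
  have ht : MeasurableSet t :=
    ((isClosed_le (by fun_prop) continuous_const).inter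
      (isClosed_closedBall.preimage continuous_snd)).measurableSet
  have hpres := measurePreserving_piFinSuccAbove (fun _ : Fin (n + 1) => (volume : Measure ℂ)) j
  calc volume (closedBall (0 : Fin (n + 1) → ℂ) R ∩ {μ | ‖∑ i, a i * μ i + c‖ ≤ ε})
      ≤ volume (MeasurableEquiv.piFinSuccAbove (fun _ => ℂ) j ⁻¹' t) := by
        refine measure_mono fun μ ⟨hμR, hμ⟩ => ⟨?_, ?_⟩
        · simpa [rest, t, Fin.sum_univ_succAbove _ j, add_assoc, Fin.removeNth] using hμ
        · rw [mem_closedBall_zero_iff] at hμR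
          exact mem_closedBall_zero_iff.2 <| (pi_norm_le_iff_of_nonneg hR).2 fun k =>
            (norm_le_pi_norm μ (j.succAbove k)).trans hμR
    _ = (volume : Measure ℂ).prod volume t := hpres.measure_preimage ht.nullMeasurableSet
    _ ≤ ENNReal.ofReal ε ^ 2 * NNReal.pi * volume (closedBall (0 : Fin n → ℂ) R) :=
        Measure.prod_apply_le_mul_of_fiber_le ht measurableSet_closedBall (fun _ hp => hp.2)
          fun y _ => (measure_mono fun _ hx => hx.1).trans
            (Complex.volume_setOf_norm_mul_add_le ha (rest y) ε)
    _ = _ := by rw [Complex.volume_closedBall_pi hR, Fintype.card_fin]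

theorem exists_one_le_norm_natCast_sub_single {ι : Type*} [Fintype ι] [DecidableEq ι]
    {m : ι → ℕ} (hm : 2 ≤ ∑ i, m i) (s : ι) :
    ∃ j, 1 ≤ ‖(m j : ℂ) - (Pi.single s 1 : ι → ℂ) j‖ := by
  have hne : (fun i => (m i : ℤ)) ≠ Pi.single s 1 := fun h => by
    have := congrArg (fun f : ι → ℤ => ∑ i, f i) h
    simp only [Finset.sum_pi_single', Finset.mem_univ, if_true, ← Nat.cast_sum] at this
    omega
  obtain ⟨j, hj⟩ := Function.ne_iff.1 hne
  refine ⟨j, ?_⟩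
  have hcast : ((m j : ℤ) - (Pi.single s 1 : ι → ℤ) j : ℤ)
      = (m j : ℂ) - (Pi.single s 1 : ι → ℂ) j := by
    rcases eq_or_ne j s with rfl | hjs <;> simp [*]
  rw [← hcast, Complex.norm_intCast]
  exact_mod_cast Int.one_le_abs (sub_ne_zero.2 hj)

theorem sum_natCast_sub_single_mul {ι : Type*} [Fintype ι] [DecidableEq ι]
    (m : ι → ℕ) (s : ι) (μ : ι → ℂ) :
    ∑ i, ((m i : ℂ) - (Pi.single s 1 : ι → ℂ) i) * μ i = ∑ i, (m i : ℂ) * μ i - μ s := by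
  simp [sub_mul, Finset.sum_sub_distrib, Pi.single_apply]

theorem ENNReal.tsum_fin_pi_prod (g : ℕ → ℝ≥0∞) (n : ℕ) :
    ∑' m : Fin n → ℕ, ∏ i, g (m i) = (∑' k, g k) ^ n := by
  induction n with
  | zero => simp
  | succ n ih =>
    rw [← (Fin.consEquiv fun _ => ℕ).tsum_eq, ENNReal.tsum_prod', pow_succ', ← ih,
      ← ENNReal.tsum_mul_right]
    refine tsum_congr fun k => ?_
    rw [← ENNReal.tsum_mul_left]
    simp [Fin.prod_univ_succ, Fin.consEquiv]

theorem prod_add_one_mul_add_one_le_pow {ι : Type*} [Fintype ι] (m : ι → ℕ) (l : ℕ)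
    (h : 1 ≤ ∑ i, m i + l) :
    (∏ i, (m i + 1)) * (l + 1) ≤ (2 * (∑ i, m i + l)) ^ (Fintype.card ι + 1) := by
  have hm : ∀ i, m i + 1 ≤ 2 * (∑ i, m i + l) := fun i => by
    have := Finset.single_le_sum (fun j _ => Nat.zero_le (m j)) (Finset.mem_univ i)
    omega
  rw [pow_succ]
  gcongr
  · exact (Finset.prod_le_prod' fun i _ => hm i).trans_eq (by simp)
  · omega

theorem rpow_neg_sum_add_le {ι : Type*} [Fintype ι] (m : ι → ℕ) (l : ℕ) :
    (((∑ i, m i : ℕ) : ℝ) + l) ^ (-(Fintype.card ι + 1 : ℝ))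
      ≤ 2 ^ (Fintype.card ι + 1) * ((∏ i, ((m i : ℝ) + 1)) * ((l : ℝ) + 1))⁻¹ := by
  rcases Nat.eq_zero_or_pos (∑ i, m i + l) with h0 | hpos
  · have hT : ((∑ i, m i : ℕ) : ℝ) + l = 0 := by exact_mod_cast h0
    rw [hT, Real.zero_rpow (neg_ne_zero.2 (by positivity))]
    positivity
  · have key : ((∏ i, ((m i : ℝ) + 1)) * ((l : ℝ) + 1))
        ≤ (2 * (((∑ i, m i : ℕ) : ℝ) + l)) ^ (Fintype.card ι + 1) := by
      exact_mod_cast prod_add_one_mul_add_one_le_pow m l hpos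
    have hT : (0 : ℝ) < ((∑ i, m i : ℕ) : ℝ) + l := by exact_mod_cast hpos
    rw [Real.rpow_neg hT.le, ← Nat.cast_add_one, Real.rpow_natCast]
    calc _ = 2 ^ (Fintype.card ι + 1)
          * ((2 * (((∑ i, m i : ℕ) : ℝ) + l)) ^ (Fintype.card ι + 1))⁻¹ := by
          rw [mul_pow]; field_simp
      _ ≤ _ := by gcongr

theorem summable_inv_add_one_sq : Summable fun k : ℕ => ((k : ℝ) + 1)⁻¹ ^ 2 := by
  have := (summable_nat_add_iff 1).2 (Real.summable_nat_pow_inv.2 one_lt_two)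
  simpa [inv_pow] using this

theorem tsum_ofReal_rpow_neg_sum_add_sq_ne_top (d : ℕ) :
    ∑' l : ℕ, ∑' m : Fin d → ℕ,
      ENNReal.ofReal ((((∑ i, m i : ℕ) : ℝ) + l) ^ (-(d + 1 : ℝ))) ^ 2 ≠ ⊤ := by
  set g : ℕ → ℝ≥0∞ := fun k => ENNReal.ofReal (((k : ℝ) + 1)⁻¹ ^ 2)
  have hg : ∑' k, g k ≠ ⊤ := by
    rw [← ENNReal.ofReal_tsum_of_nonneg (fun _ => by positivity) summable_inv_add_one_sq]
    exact ENNReal.ofReal_ne_top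
  have hterm : ∀ (l : ℕ) (m : Fin d → ℕ),
      ENNReal.ofReal ((((∑ i, m i : ℕ) : ℝ) + l) ^ (-(d + 1 : ℝ))) ^ 2
        ≤ ENNReal.ofReal (2 ^ (d + 1)) ^ 2 * ((∏ i, g (m i)) * g l) := fun l m => by
    have h := rpow_neg_sum_add_le m l
    rw [Fintype.card_fin] at h
    calc _ ≤ ENNReal.ofReal (2 ^ (d + 1) * ((∏ i, ((m i : ℝ) + 1)) * ((l : ℝ) + 1))⁻¹) ^ 2 := by
          gcongr
      _ = _ := by
          rw [mul_inv, ← Finset.prod_inv_distrib, ENNReal.ofReal_mul (by positivity),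
            ENNReal.ofReal_mul (by positivity),
            ENNReal.ofReal_prod_of_nonneg fun _ _ => by positivity]
          simp only [g, ENNReal.ofReal_pow (inv_nonneg.2 (Nat.cast_add_one_pos _).le), mul_pow,
            Finset.prod_pow]
  refine ne_top_of_le_ne_top ?_ (ENNReal.tsum_le_tsum fun l => ENNReal.tsum_le_tsum (hterm l))
  simp only [ENNReal.tsum_mul_left, ENNReal.tsum_mul_right, ENNReal.tsum_fin_pi_prod]
  exact ENNReal.mul_ne_top (ENNReal.pow_ne_top ENNReal.ofReal_ne_top)
    (ENNReal.mul_ne_top (ENNReal.pow_ne_top hg) hg)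

theorem volume_closedBall_inter_resonance_le {n : ℕ} {R : ℝ} (hR : 0 ≤ R)
    {m : Fin (n + 1) → ℕ} (hm : 2 ≤ ∑ i, m i) (s : Fin (n + 1)) (l : ℕ) (ε : ℝ) :
    volume (closedBall (0 : Fin (n + 1) → ℂ) R ∩
        {μ | ‖(∑ i, (m i : ℂ) * μ i) + (l : ℂ) - μ s‖ ≤ ε})
      ≤ ENNReal.ofReal ε ^ 2 * NNReal.pi * (ENNReal.ofReal R ^ 2 * NNReal.pi) ^ n := by
  obtain ⟨j, hj⟩ := exists_one_le_norm_natCast_sub_single hm s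
  convert volume_closedBall_inter_setOf_norm_linear_le
    (fun i => (m i : ℂ) - (Pi.single s 1 : Fin (n + 1) → ℂ) i) hj (l : ℂ) ε hR using 5 with μ
  rw [sum_natCast_sub_single_mul]
  ring_nf

def IsDiophantine {d : ℕ} (μ : Fin d → ℂ) : Prop :=
  ∃ C ν : ℝ, 0 < C ∧ 0 < ν ∧
    ∀ (l : ℕ) (s : Fin d) (m : Fin d → ℕ), 2 ≤ ∑ i, m i →
      C * (((∑ i, m i : ℕ) : ℝ) + (l : ℝ)) ^ (-ν)
        < ‖(∑ i, (m i : ℂ) * μ i) + (l : ℂ) - μ s‖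

theorem volume_closedBall_inter_not_isDiophantine_le (n : ℕ) {R : ℝ} (hR : 0 ≤ R) :
    ∃ K ≠ ⊤, ∀ C : ℝ, 0 < C →
      volume (closedBall (0 : Fin (n + 1) → ℂ) R ∩ {μ | ¬ IsDiophantine μ})
        ≤ ENNReal.ofReal C ^ 2 * K := by
  set ν : ℝ := ((n + 1 : ℕ) : ℝ) + 1
  set T : (Fin (n + 1) → ℕ) → ℕ → ℝ := fun m l => ((∑ i, m i : ℕ) : ℝ) + l
  set V := (ENNReal.ofReal R ^ 2 * NNReal.pi) ^ n
  set S := ∑' (l : ℕ) (m : Fin (n + 1) → ℕ), ENNReal.ofReal (T m l ^ (-ν)) ^ 2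
  refine ⟨(n + 1 : ℕ) * (NNReal.pi * V * S),
    by finiteness [tsum_ofReal_rpow_neg_sum_add_sq_ne_top (n + 1)], fun C hC => ?_⟩
  calc _ ≤ volume (⋃ (s : Fin (n + 1)) (l : ℕ) (m : Fin (n + 1) → ℕ),
        closedBall (0 : Fin (n + 1) → ℂ) R ∩
          {μ | 2 ≤ ∑ i, m i ∧ ‖(∑ i, (m i : ℂ) * μ i) + (l : ℂ) - μ s‖ ≤ C * T m l ^ (-ν)}) := by
        refine measure_mono fun μ ⟨hμR, hμ⟩ => ?_
        simp only [IsDiophantine, not_exists, not_and, not_forall, not_lt] at hμ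
        obtain ⟨l, s, m, hm, hle⟩ := hμ C ν hC (by positivity)
        simp only [Set.mem_iUnion]
        exact ⟨s, l, m, hμR, hm, hle⟩
    _ ≤ ∑' (s : Fin (n + 1)) (l : ℕ) (m : Fin (n + 1) → ℕ),
        ENNReal.ofReal C ^ 2 * (NNReal.pi * V * ENNReal.ofReal (T m l ^ (-ν)) ^ 2) := by
        refine (measure_iUnion_le _).trans <| ENNReal.tsum_le_tsum fun s =>
          (measure_iUnion_le _).trans <| ENNReal.tsum_le_tsum fun l =>
          (measure_iUnion_le _).trans <| ENNReal.tsum_le_tsum fun m => ?_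
        by_cases hm : 2 ≤ ∑ i, m i
        · refine (measure_mono (Set.inter_subset_inter_right _ fun _ hμ => hμ.2)).trans <|
            (volume_closedBall_inter_resonance_le hR hm s l _).trans_eq ?_
          rw [ENNReal.ofReal_mul hC.le]
          ring
        · simp [hm]
    _ = _ := by
        simp only [ENNReal.tsum_mul_left, tsum_fintype, Finset.sum_const, Finset.card_univ,
          Fintype.card_fin, nsmul_eq_mul]
        ring

open Filter Topology in
theorem ENNReal.eq_zero_of_forall_le_ofReal_sq_mul {x K : ℝ≥0∞} (hK : K ≠ ⊤)
    (h : ∀ C : ℝ, 0 < C → x ≤ ENNReal.ofReal C ^ 2 * K) : x = 0 := by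
  have h0 : Tendsto (fun C : ℝ => ENNReal.ofReal C ^ 2) (𝓝 0) (𝓝 0) := by
    simpa using ENNReal.Tendsto.pow (n := 2) (ENNReal.tendsto_ofReal (tendsto_id (x := 𝓝 0)))
  have hlim : Tendsto (fun C : ℝ => ENNReal.ofReal C ^ 2 * K) (𝓝[>] 0) (𝓝 0) := by
    simpa using (ENNReal.Tendsto.mul_const h0 (Or.inr hK)).mono_left nhdsWithin_le_nhds
  exact le_antisymm (ge_of_tendsto hlim (eventually_nhdsWithin_of_forall h)) zero_le

/-- The set of `μ ∈ ℂ^d` that fail the Diophantine condition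
`|m·μ + l − μ_s| > C(|m| + l)^{−ν}` (for some `C, ν > 0`, all `l ∈ ℕ`, `s`, and `|m| ≥ 2`)
has Lebesgue measure zero. -/
theorem diophantine_condition_generic (d : ℕ) (hd : 1 ≤ d) :
    volume {μ : Fin d → ℂ |
      ¬ ∃ C ν : ℝ, 0 < C ∧ 0 < ν ∧
        ∀ (l : ℕ) (s : Fin d) (m : Fin d → ℕ), 2 ≤ ∑ i, m i →
          C * (((∑ i, m i : ℕ) : ℝ) + (l : ℝ)) ^ (-ν)
            < ‖(∑ i, (m i : ℂ) * μ i) + (l : ℂ) - μ s‖} = 0 := by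
  obtain ⟨n, rfl⟩ : ∃ n, d = n + 1 := ⟨d - 1, by omega⟩
  change volume {μ : Fin (n + 1) → ℂ | ¬ IsDiophantine μ} = 0
  rw [← Set.univ_inter {μ | _}, ← iUnion_closedBall_nat 0, Set.iUnion_inter]
  refine measure_iUnion_null fun R => ?_
  obtain ⟨K, hK, hle⟩ := volume_closedBall_inter_not_isDiophantine_le n (R.cast_nonneg (α := ℝ))
  exact ENNReal.eq_zero_of_forall_le_ofReal_sq_mul hK hle
end

section
/- Let a, m, n ∈ ℂ with a ≠ 0 and 2a + 1 ≠ 0. Set φ₂ = m/(2a+1), h₂(x) = (m/(2a+1)) x + n/(2a), and H(x, w) = w / (1 − h₂(x) w). Then for all x ∈ ℂ with x ≠ 1 and x ≠ −1 and all w ∈ ℂ with 1 − h₂(x)w ≠ 0, the identity ∂_x H(x, w) + ∂_w H(x, w) · (2ax/(x² − 1)) w = (2ax/(x² − 1)) H(x, w) + ((m x² + n x − φ₂)/(x² − 1)) H(x, w)² holds. -/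
set_option maxHeartbeats 1000000

/-- With `φ₂ = m/(2a+1)`, `h₂(x) = (m/(2a+1)) x + n/(2a)` and `H(x,w) = w/(1 − h₂(x) w)`,
the map `u = H(x,w)` linearizes the corrected Riccati equation
`u' = (2ax/(x²−1)) u + ((m x² + n x − φ₂)/(x²−1)) u²`. -/
theorem riccati_linearization (a m n : ℂ) (ha : a ≠ 0) (ha2 : 2 * a + 1 ≠ 0) :
    ∀ x w : ℂ, x ≠ 1 → x ≠ -1 →
      1 - (m / (2 * a + 1) * x + n / (2 * a)) * w ≠ 0 →
      deriv (fun t : ℂ => w / (1 - (m / (2 * a + 1) * t + n / (2 * a)) * w)) x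
        + deriv (fun v : ℂ => v / (1 - (m / (2 * a + 1) * x + n / (2 * a)) * v)) w
            * (2 * a * x / (x ^ 2 - 1) * w)
      = 2 * a * x / (x ^ 2 - 1)
            * (w / (1 - (m / (2 * a + 1) * x + n / (2 * a)) * w))
        + (m * x ^ 2 + n * x - m / (2 * a + 1)) / (x ^ 2 - 1)
            * (w / (1 - (m / (2 * a + 1) * x + n / (2 * a)) * w)) ^ 2 := by
  intro x w hx1 hx2 hD
  set c : ℂ := m / (2 * a + 1) with hc
  set d : ℂ := n / (2 * a) with hd
  set D : ℂ := 1 - (c * x + d) * w with hDdef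
  have hx2ne : x ^ 2 - 1 ≠ 0 := by
    intro h
    have : (x - 1) * (x + 1) = 0 := by linear_combination h
    rcases mul_eq_zero.mp this with h' | h'
    · exact hx1 (sub_eq_zero.mp h')
    · exact hx2 (eq_neg_of_add_eq_zero_left h')
  -- derivative in t
  have hden : HasDerivAt (fun t : ℂ => 1 - (c * t + d) * w) (-(c * w)) x := by
    have h1 : HasDerivAt (fun t : ℂ => (c * t + d) * w) (c * w) x := by
      have : HasDerivAt (fun t : ℂ => c * t + d) c x := by
        simpa using ((hasDerivAt_id x).const_mul c).add_const d
      simpa using this.mul_const w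
    simpa using h1.const_sub (1 : ℂ)
  have hderiv1 : HasDerivAt (fun t : ℂ => w / (1 - (c * t + d) * w))
      (c * w ^ 2 / D ^ 2) x := by
    have := (hasDerivAt_const x w).fun_div hden hD
    refine this.congr_deriv ?_
    rw [hDdef]
    field_simp [show 1 - (c * x + d) * w ≠ 0 from hD]
    ring
  have hden2 : HasDerivAt (fun v : ℂ => 1 - (c * x + d) * v) (-(c * x + d)) w := by
    simpa using ((hasDerivAt_id w).const_mul (c * x + d)).const_sub (1 : ℂ)
  have hderiv2 : HasDerivAt (fun v : ℂ => v / (1 - (c * x + d) * v)) (1 / D ^ 2) w := by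
    have := (hasDerivAt_id w).fun_div hden2 hD
    refine this.congr_deriv ?_
    rw [hDdef, id]
    field_simp [show 1 - (c * x + d) * w ≠ 0 from hD]
    ring
  rw [hderiv1.deriv, hderiv2.deriv]
  have hcm : c * (2 * a + 1) = m := by rw [hc]; field_simp
  have hdn : d * (2 * a) = n := by rw [hd]; field_simp
  rw [hDdef, ← hcm, ← hdn]
  field_simp
  ring
end

section
/- Let m, n, φ₂, C ∈ ℝ. Define h : (−1, 1) → ℝ by h(x) = m[√(1 − x²)·arcsin(x) − x] − n + φ₂ x + C√(1 − x²). Then h is differentiable on (−1, 1) and satisfies (x² − 1) h'(x) − x h(x) = m x² + n x − φ₂ for all x ∈ (−1, 1). (This exhibits the general solution of the equation h₂' + (a/(x−1) + b/(x+1))h₂ = (f − φ₂)/(x² − 1) in the resonant case a = b = −1/2 with f(x) = m x² + n x, multiplied through by x² − 1; note that for a = b = −1/2, a/(x−1) + a/(x+1) = −x/(x² − 1).) -/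
/-!
Write `s = √(1 - x²)`. On `(-1, 1)` we have `s' = -x / s`, so `(x² - 1) s' = x s`: the function `s`
solves the homogeneous equation `(x² - 1) h' - x h = 0`. Since `arcsin' = 1 / s`, the product rule
gives `(s · arcsin x - x)' = arcsin x · s'`, hence `(x² - 1) h' - x h = x²` for
`h = s · arcsin x - x`. An affine `h = φ₂ x - n` gives `n x - φ₂`, and linearity finishes.
-/

open Real Set

lemma hasDerivAt_sqrt_one_sub_sq {x : ℝ} (hx : x ^ 2 < 1) :
    HasDerivAt (fun t : ℝ => √(1 - t ^ 2)) (-x / √(1 - x ^ 2)) x := by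
  have hinner : HasDerivAt (fun t : ℝ => 1 - t ^ 2) (-(2 * x)) x := by
    simpa using (hasDerivAt_pow 2 x).const_sub 1
  refine ((hasDerivAt_sqrt (by linarith)).comp x hinner).congr_deriv ?_
  ring

lemma sq_sub_one_mul_neg_div_sqrt_one_sub_sq {x : ℝ} (hx : x ^ 2 < 1) :
    (x ^ 2 - 1) * (-x / √(1 - x ^ 2)) = x * √(1 - x ^ 2) := by
  have hpos : 0 < √(1 - x ^ 2) := sqrt_pos.2 (by linarith)
  have hsq : √(1 - x ^ 2) ^ 2 = 1 - x ^ 2 := sq_sqrt (by linarith)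
  field_simp
  linear_combination -x * hsq

lemma hasDerivAt_sqrt_one_sub_sq_mul_arcsin_sub_id {x : ℝ} (hx : x ∈ Ioo (-1 : ℝ) 1) :
    HasDerivAt (fun t : ℝ => √(1 - t ^ 2) * arcsin t - t)
      (arcsin x * (-x / √(1 - x ^ 2))) x := by
  have hsq : x ^ 2 < 1 := by nlinarith [hx.1, hx.2]
  have hpos : 0 < √(1 - x ^ 2) := sqrt_pos.2 (by linarith)
  refine (((hasDerivAt_sqrt_one_sub_sq hsq).mul
    (hasDerivAt_arcsin hx.1.ne' hx.2.ne)).sub (hasDerivAt_id x)).congr_deriv ?_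
  field_simp
  ring

/-- In the resonant case `a = b = −1/2` with `f(x) = m x² + n x`, the function
`h(x) = m[√(1−x²)·arcsin x − x] − n + φ₂ x + C √(1−x²)` is differentiable on `(−1,1)` and
satisfies `(x² − 1) h'(x) − x h(x) = m x² + n x − φ₂` there. -/
theorem resonant_general_solution (m n φ₂ C : ℝ) :
    ∀ x ∈ Set.Ioo (-1 : ℝ) 1,
      DifferentiableAt ℝ
          (fun t : ℝ =>
            m * (Real.sqrt (1 - t ^ 2) * Real.arcsin t - t) - n + φ₂ * t
              + C * Real.sqrt (1 - t ^ 2)) x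
        ∧ (x ^ 2 - 1)
              * deriv (fun t : ℝ =>
                  m * (Real.sqrt (1 - t ^ 2) * Real.arcsin t - t) - n + φ₂ * t
                    + C * Real.sqrt (1 - t ^ 2)) x
            - x * (m * (Real.sqrt (1 - x ^ 2) * Real.arcsin x - x) - n + φ₂ * x
                    + C * Real.sqrt (1 - x ^ 2))
          = m * x ^ 2 + n * x - φ₂ := by
  intro x hx
  have hsq : x ^ 2 < 1 := by nlinarith [hx.1, hx.2]
  have hD : HasDerivAt (fun t : ℝ => m * (√(1 - t ^ 2) * arcsin t - t) - n + φ₂ * t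
      + C * √(1 - t ^ 2)) (m * (arcsin x * (-x / √(1 - x ^ 2))) + φ₂ * 1 + C * (-x / √(1 - x ^ 2))) x :=
    ((((hasDerivAt_sqrt_one_sub_sq_mul_arcsin_sub_id hx).const_mul m).sub_const n).add
      ((hasDerivAt_id x).const_mul φ₂)).add ((hasDerivAt_sqrt_one_sub_sq hsq).const_mul C)
  refine ⟨hD.differentiableAt, ?_⟩
  rw [hD.deriv]
  linear_combination (m * arcsin x + C) * sq_sub_one_mul_neg_div_sqrt_one_sub_sq hsq
end

section
/- Let m, n ∈ ℂ with m ≠ 0. Then there exist no φ₂ ∈ ℂ, no open set U ⊆ ℂ containing the segment [−1, 1], and no analytic function h : U → ℂ such that (x² − 1) h'(x) − x h(x) = m x² + n x − φ₂ for all x ∈ U. (That is, in the resonant case a = b = −1/2, when m ≠ 0 no correction constant φ₂ makes the order-2 linearization coefficient single-valued and analytic at both singular points x = 1 and x = −1: existence of corrections fails.) -/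
/-!
Differentiating the equation twice removes `n` and `φ₂`: `g = h''` satisfies
`(x² − 1) g' + 3 x g = 2 m`. On `(−1, 1)` the integrating factor `(1 − x²)^{3/2}` gives
`((1 − x²)^{3/2} g)' = −2 m √(1 − x²)`. The bracket vanishes at `±1` because `g` is continuous
there, so integrating over `[−1, 1]` yields `π m = 0`.
-/

open Set

section ResonantOp

variable {𝕜 : Type*} [NontriviallyNormedField 𝕜]

noncomputable def resonantOp (c : 𝕜) (g : 𝕜 → 𝕜) (x : 𝕜) : 𝕜 :=
  (x ^ 2 - 1) * deriv g x + c * x * g x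

theorem hasDerivAt_resonantOp (c : 𝕜) {g : 𝕜 → 𝕜} {x : 𝕜} (hg : DifferentiableAt 𝕜 g x)
    (hg' : DifferentiableAt 𝕜 (deriv g) x) :
    HasDerivAt (resonantOp c g) (resonantOp (c + 2) (deriv g) x + c * g x) x := by
  have hsq : HasDerivAt (fun y : 𝕜 => y ^ 2 - 1) (2 * x) x := by
    simpa using (hasDerivAt_pow 2 x).sub_const 1
  refine ((hsq.mul hg'.hasDerivAt).add
    (((hasDerivAt_id' x).const_mul c).mul hg.hasDerivAt)).congr_deriv ?_
  simp only [resonantOp]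
  ring

end ResonantOp

theorem resonantOp_three_deriv_deriv_eqOn {U : Set ℂ} {h : ℂ → ℂ} {m n φ : ℂ} (hU : IsOpen U)
    (hh : AnalyticOnNhd ℂ h U) (heq : EqOn (resonantOp (-1) h) (fun x => m * x ^ 2 + n * x - φ) U) :
    EqOn (resonantOp 3 (deriv (deriv h))) (fun _ => 2 * m) U := by
  have hh' := hh.deriv
  have hh'' := hh'.deriv
  have heq' : EqOn (fun x => resonantOp 1 (deriv h) x - h x) (fun x => 2 * m * x + n) U := by
    intro x hx
    have hd := hasDerivAt_resonantOp (-1) (hh x hx).differentiableAt (hh' x hx).differentiableAt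
    have hrhs : HasDerivAt (fun x => m * x ^ 2 + n * x - φ) (2 * m * x + n) x := by
      refine ((((hasDerivAt_pow 2 x).const_mul m).add
        ((hasDerivAt_id' x).const_mul n)).sub_const φ).congr_deriv ?_
      ring
    have := hd.deriv.symm.trans ((heq.deriv hU hx).trans hrhs.deriv)
    rw [show (-1 : ℂ) + 2 = 1 by norm_num] at this
    dsimp only
    linear_combination this
  intro x hx
  have hd := (hasDerivAt_resonantOp 1 (hh' x hx).differentiableAt
    (hh'' x hx).differentiableAt).sub (hh x hx).differentiableAt.hasDerivAt
  have hrhs : HasDerivAt (fun x => 2 * m * x + n) (2 * m) x := by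
    simpa using ((hasDerivAt_id x).const_mul (2 * m)).add_const n
  have := hd.deriv.symm.trans ((heq'.deriv hU hx).trans hrhs.deriv)
  rw [show (1 : ℂ) + 2 = 3 by norm_num] at this
  dsimp only
  linear_combination this

theorem hasDerivAt_one_sub_sq_mul_sqrt {t : ℝ} (ht : t ∈ Ioo (-1) 1) :
    HasDerivAt (fun u : ℝ => (1 - u ^ 2) * √(1 - u ^ 2)) (-(3 * t * √(1 - t ^ 2))) t := by
  have hpos : 0 < 1 - t ^ 2 := by nlinarith [ht.1, ht.2]
  have hin : HasDerivAt (fun u : ℝ => 1 - u ^ 2) (-(2 * t)) t := by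
    simpa using (hasDerivAt_pow 2 t).const_sub 1
  refine (hin.mul (hin.sqrt hpos.ne')).congr_deriv ?_
  have hsq : √(1 - t ^ 2) * √(1 - t ^ 2) = 1 - t ^ 2 := Real.mul_self_sqrt hpos.le
  field_simp
  linear_combination t * hsq

theorem eq_zero_of_resonantOp_three_eq_const {g : ℂ → ℂ} {c : ℂ}
    (hg : ∀ t ∈ Icc (-1 : ℝ) 1, DifferentiableAt ℂ g t)
    (heq : ∀ t ∈ Ioo (-1 : ℝ) 1, resonantOp 3 g t = c) : c = 0 := by
  set F : ℝ → ℂ := fun t => ((1 - t ^ 2) * √(1 - t ^ 2)) • g t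
  have hF' : ∀ t ∈ Ioo (-1 : ℝ) 1, HasDerivAt F ((-√(1 - t ^ 2)) • c) t := by
    intro t ht
    refine ((hasDerivAt_one_sub_sq_mul_sqrt ht).smul
      (hg t (Ioo_subset_Icc_self ht)).hasDerivAt.comp_ofReal).congr_deriv ?_
    rw [← heq t ht]
    simp only [resonantOp, Complex.real_smul]
    push_cast
    ring
  have hgc : ContinuousOn (fun t : ℝ => g t) (Icc (-1) 1) := fun t ht =>
    ((hg t ht).continuousAt.comp Complex.continuous_ofReal.continuousAt).continuousWithinAt
  have hw : Continuous fun u : ℝ => (1 - u ^ 2) * √(1 - u ^ 2) := by fun_prop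
  have hFc : ContinuousOn F (Icc (-1) 1) := hw.continuousOn.smul hgc
  have hFTC := intervalIntegral.integral_eq_sub_of_hasDerivAt_of_le (by norm_num) hFc hF'
    (by apply Continuous.intervalIntegrable; fun_prop)
  rw [intervalIntegral.integral_smul_const, intervalIntegral.integral_neg,
    integral_sqrt_one_sub_sq] at hFTC
  simpa [F, Real.pi_ne_zero] using hFTC

/-- In the resonant case `a = b = −1/2`, when `m ≠ 0` there is no correction constant `φ₂`
for which the equation `(x² − 1) h'(x) − x h(x) = m x² + n x − φ₂` has a solution `h`
analytic on an open set containing the segment `[−1, 1]`: existence of corrections fails. -/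
theorem resonant_no_correction (m n : ℂ) (hm : m ≠ 0) :
    ¬ ∃ (φ₂ : ℂ) (U : Set ℂ) (h : ℂ → ℂ),
        IsOpen U ∧ (Complex.ofReal '' Set.Icc (-1 : ℝ) 1) ⊆ U ∧
        AnalyticOnNhd ℂ h U ∧
        ∀ x ∈ U, (x ^ 2 - 1) * deriv h x - x * h x = m * x ^ 2 + n * x - φ₂ := by
  rintro ⟨φ₂, U, h, hU, hsegment, hh, heq⟩
  have hmem : ∀ t ∈ Icc (-1 : ℝ) 1, (t : ℂ) ∈ U := fun t ht => hsegment ⟨t, ht, rfl⟩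
  have hode : EqOn (resonantOp (-1) h) (fun x => m * x ^ 2 + n * x - φ₂) U := fun x hx => by
    simp only [resonantOp, ← heq x hx]
    ring
  have h2m := eq_zero_of_resonantOp_three_eq_const
    (fun t ht => (hh.deriv.deriv _ (hmem t ht)).differentiableAt)
    (fun t ht => resonantOp_three_deriv_deriv_eqOn hU hh hode (hmem t (Ioo_subset_Icc_self ht)))
  exact hm (by simpa using h2m)
end
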